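/- (Neighbor Removal Lemma) Let r be a vertex of a connected graph G and A ⊆ N(r) a set of neighbors with N(A) ⊆ N[r]. Then π(G,r) = |A| + π(G−A, r). -/

import Mathlib

open SimpleGraph

/-- A single pebbling step: remove two pebbles from `u`, add one to a neighbor `v`. -/
def PebStep {V : Type} (G : SimpleGraph V) (C C' : V → ℕ) : Prop :=
  ∃ u v : V, G.Adj u v ∧ 2 ≤ C u ∧
    C' u + 2 = C u ∧ C' v = C v + 1 ∧ ∀ w, w ≠ u → w ≠ v → C' w = C w

/-- `C` is `t`-fold `r`-solvable. -/
def TSolvable {V : Type} (G : SimpleGraph V) (C : V → ℕ) (r : V) (t : ℕ) : Prop :=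
  ∃ C', Relation.ReflTransGen (PebStep G) C C' ∧ t ≤ C' r

/-- The `t`-pebbling number of `G` rooted at `r`. -/
noncomputable def piT {V : Type} (G : SimpleGraph V) (r : V) (t : ℕ) : ℕ :=
  sInf {s | ∀ C : V → ℕ, s ≤ ∑ᶠ v, C v → TSolvable G C r t}

/-- The pebbling number of `G` rooted at `r`. -/
noncomputable def pin {V : Type} (G : SimpleGraph V) (r : V) : ℕ := piT G r 1

/-- The `t`-pebbling number of `G`. -/
noncomputable def piGt {V : Type} (G : SimpleGraph V) (t : ℕ) : ℕ := ⨆ r, piT G r t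

/-- The pebbling number of `G`. -/
noncomputable def piG {V : Type} (G : SimpleGraph V) : ℕ := ⨆ r, pin G r

/-- Eccentricity of `r`. -/
noncomputable def eccG {V : Type} (G : SimpleGraph V) (r : V) : ℕ := ⨆ v, G.dist r v

/-- Diameter of `G`. -/
noncomputable def diamG {V : Type} (G : SimpleGraph V) : ℕ := ⨆ u, eccG G u

/-!
With `|A| + π(G - A, r)` pebbles, either some `a ∈ A` carries two pebbles and moves one to `r`,
or `A` carries at most `|A|` pebbles and the remaining ones solve `r` inside `G - A`.
Conversely, add one pebble on each vertex of `A` to an `r`-unsolvable configuration of `G - A`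
of size `π(G - A, r) - 1`. While every vertex of `A` holds at most one pebble, no move leaves `A`,
and a move into `A` starts at a vertex of `N[r]`, which could as well have moved to `r`; so every
solution in `G` is mirrored by one in `G - A`.
-/

open Relation

section

variable {V : Type} {G : SimpleGraph V} {r : V} {t : ℕ}

section Moves

variable [DecidableEq V]

def pebbleMove (D : V → ℕ) (u v : V) : V → ℕ :=
  Function.update (Function.update D u (D u - 2)) v (D v + 1)

theorem pebStep_iff {D D' : V → ℕ} :
    PebStep G D D' ↔ ∃ u v, G.Adj u v ∧ 2 ≤ D u ∧ D' = pebbleMove D u v := by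
  constructor
  · rintro ⟨u, v, huv, h2, hu, hv, hw⟩
    refine ⟨u, v, huv, h2, funext fun w => ?_⟩
    by_cases hwv : w = v
    · subst hwv
      simp [pebbleMove, hv]
    by_cases hwu : w = u
    · subst hwu
      simp only [pebbleMove, Function.update_of_ne hwv, Function.update_self]
      omega
    · simp [pebbleMove, hwu, hwv, hw w hwu hwv]
  · rintro ⟨u, v, huv, h2, rfl⟩
    refine ⟨u, v, huv, h2, ?_, ?_, fun w hwu hwv => ?_⟩
    · simp only [pebbleMove, Function.update_of_ne huv.ne, Function.update_self]
      omega
    · simp [pebbleMove]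
    · simp [pebbleMove, hwu, hwv]

theorem pebStep_pebbleMove {D : V → ℕ} {u v : V} (huv : G.Adj u v) (h2 : 2 ≤ D u) :
    PebStep G D (pebbleMove D u v) :=
  pebStep_iff.2 ⟨u, v, huv, h2, rfl⟩

theorem pebbleMove_comp {W : Type} [DecidableEq W] {f : W → V} (hf : f.Injective) (D : V → ℕ)
    (u v : W) : pebbleMove D (f u) (f v) ∘ f = pebbleMove (D ∘ f) u v := by
  simp [pebbleMove, Function.update_comp_eq_of_injective _ hf]

theorem pebStep_induce {s : Set V} {D : V → ℕ} {u v : s} (huv : G.Adj u v) (h2 : 2 ≤ D u) :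
    PebStep (G.induce s) (D ∘ (↑)) (pebbleMove D u v ∘ (↑)) := by
  rw [pebbleMove_comp Subtype.val_injective]
  exact pebStep_pebbleMove huv h2

end Moves

theorem exists_pebStep_of_pebStep_induce {s : Set V} {D : V → ℕ} {F' : s → ℕ}
    (h : PebStep (G.induce s) (D ∘ (↑)) F') : ∃ D', PebStep G D D' ∧ D' ∘ (↑) = F' := by
  classical
  obtain ⟨u, v, huv, h2, rfl⟩ := pebStep_iff.1 h
  exact ⟨_, pebStep_pebbleMove huv h2, pebbleMove_comp Subtype.val_injective D u v⟩

theorem exists_reflTransGen_of_reflTransGen_induce {s : Set V} {D : V → ℕ} {F' : s → ℕ}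
    (h : ReflTransGen (PebStep (G.induce s)) (D ∘ (↑)) F') :
    ∃ D', ReflTransGen (PebStep G) D D' ∧ D' ∘ (↑) = F' := by
  induction h with
  | refl => exact ⟨D, .refl, rfl⟩
  | tail _ hstep ih =>
    obtain ⟨D₁, hD₁, rfl⟩ := ih
    obtain ⟨D₂, hD₂, rfl⟩ := exists_pebStep_of_pebStep_induce hstep
    exact ⟨D₂, hD₁.tail hD₂, rfl⟩

namespace TSolvable

theorem of_le {C : V → ℕ} (h : t ≤ C r) : TSolvable G C r t := ⟨C, .refl, h⟩

theorem of_reflTransGen {C C' : V → ℕ} (h : ReflTransGen (PebStep G) C C')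
    (h' : TSolvable G C' r t) : TSolvable G C r t :=
  let ⟨C'', h'', ht⟩ := h'
  ⟨C'', h.trans h'', ht⟩

theorem head {C C' : V → ℕ} (h : PebStep G C C') (h' : TSolvable G C' r t) :
    TSolvable G C r t :=
  of_reflTransGen (.single h) h'

theorem of_induce {s : Set V} {r : s} {D : V → ℕ} (h : TSolvable (G.induce s) (D ∘ (↑)) r t) :
    TSolvable G D r t := by
  obtain ⟨F', hF', ht⟩ := h
  obtain ⟨D', hD', rfl⟩ := exists_reflTransGen_of_reflTransGen_induce hF'
  exact ⟨D', hD', ht⟩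

end TSolvable

theorem not_tsolvable_zero (ht : 0 < t) : ¬ TSolvable G 0 r t := by
  suffices h : ∀ C', ReflTransGen (PebStep G) 0 C' → C' = 0 by
    rintro ⟨C', hC', htC'⟩
    simp only [h C' hC', Pi.zero_apply] at htC'
    omega
  intro C' h
  induction h with
  | refl => rfl
  | tail _ hstep ih =>
    subst ih
    obtain ⟨u, v, -, h2, -⟩ := hstep
    simp at h2

theorem exists_reflTransGen_add_le {u v : V} (huv : G.Adj u v) (k : ℕ) {C : V → ℕ}
    (h : 2 * k ≤ C u) : ∃ C', ReflTransGen (PebStep G) C C' ∧ C v + k ≤ C' v := by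
  classical
  induction k generalizing C with
  | zero => exact ⟨C, .refl, le_rfl⟩
  | succ k ih =>
    obtain ⟨C', hC', hv⟩ := ih (C := pebbleMove C u v)
      (by simp only [pebbleMove, Function.update_of_ne huv.ne, Function.update_self]; omega)
    refine ⟨C', .head (pebStep_pebbleMove huv (by omega)) hC', ?_⟩
    simp only [pebbleMove, Function.update_self] at hv
    omega

theorem tsolvable_of_walk {v : V} (p : G.Walk r v) {C : V → ℕ} (h : t * 2 ^ p.length ≤ C v) :
    TSolvable G C r t := by
  induction p generalizing t with
  | nil => exact .of_le (by simpa using h)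
  | cons hadj q ih =>
    obtain ⟨C₁, hC₁, h₁⟩ := ih (t := 2 * t)
      (by rw [Walk.length_cons, pow_succ] at h; linarith)
    obtain ⟨C₂, hC₂, h₂⟩ := exists_reflTransGen_add_le hadj.symm t h₁
    exact .of_reflTransGen (hC₁.trans hC₂) (.of_le (by omega))

theorem exists_forall_tsolvable [Finite V] (hG : G.Connected) (r : V) (t : ℕ) :
    ∃ B, ∀ C : V → ℕ, B ≤ ∑ᶠ v, C v → TSolvable G C r t := by
  cases nonempty_fintype V
  refine ⟨∑ v, t * 2 ^ G.dist r v, fun C hC => ?_⟩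
  rw [finsum_eq_sum_of_fintype] at hC
  obtain ⟨v, -, hv⟩ := Finset.exists_le_of_sum_le ⟨r, Finset.mem_univ r⟩ hC
  obtain ⟨p, hp⟩ := (hG.preconnected r v).exists_walk_length_eq_dist
  exact tsolvable_of_walk p (hp ▸ hv)

theorem piT_eq_of_forall_of_exists {n : ℕ}
    (hsolv : ∀ C : V → ℕ, n ≤ ∑ᶠ v, C v → TSolvable G C r t)
    (hunsolv : ∃ C : V → ℕ, n ≤ ∑ᶠ v, C v + 1 ∧ ¬ TSolvable G C r t) : piT G r t = n := by
  obtain ⟨C, hC, hCu⟩ := hunsolv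
  refine le_antisymm (Nat.sInf_le hsolv) (le_csInf ⟨n, hsolv⟩ fun s hs => ?_)
  by_contra! hsn
  exact hCu (hs C (by omega))

theorem tsolvable_of_piT_le (hB : ∃ B, ∀ C : V → ℕ, B ≤ ∑ᶠ v, C v → TSolvable G C r t)
    {C : V → ℕ} (hC : piT G r t ≤ ∑ᶠ v, C v) : TSolvable G C r t :=
  Nat.sInf_mem hB C hC

theorem exists_not_tsolvable (ht : 0 < t) :
    ∃ C : V → ℕ, piT G r t ≤ ∑ᶠ v, C v + 1 ∧ ¬ TSolvable G C r t := by
  rcases Nat.eq_zero_or_pos (piT G r t) with h | h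
  · exact ⟨0, by omega, not_tsolvable_zero ht⟩
  · have := Nat.notMem_of_lt_sInf (Nat.sub_lt h one_pos)
    simp only [Set.mem_ofPred_eq, not_forall, exists_prop] at this
    obtain ⟨C, hC, hCu⟩ := this
    exact ⟨C, by unfold piT; omega, hCu⟩

theorem SimpleGraph.Connected.induce_of_neighborSet_subset (hG : G.Connected) {A : Set V}
    (hrA : r ∉ A) (hNA : ∀ a ∈ A, G.neighborSet a ⊆ insert r (G.neighborSet r)) :
    (G.induce {v | v ∉ A}).Connected := by
  have reach : ∀ x y (p : G.Walk x y), y = r → ∀ hx : x ∉ A,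
      (G.induce {v | v ∉ A}).Reachable ⟨x, hx⟩ ⟨r, hrA⟩ := by
    intro x y p
    induction p with
    | nil => rintro rfl hx; rfl
    | @cons x y _ hxy _ ih =>
      intro hr hx
      by_cases hy : y ∈ A
      · rcases hNA y hy hxy.symm with rfl | hrx
        · rfl
        · exact (show (G.induce {v | v ∉ A}).Adj ⟨x, hx⟩ ⟨r, hrA⟩ from hrx.symm).reachable
      · exact (show (G.induce {v | v ∉ A}).Adj ⟨x, hx⟩ ⟨y, hy⟩ from hxy).reachable.trans
          (ih hr hy)
  have : Nonempty {v | v ∉ A} := ⟨⟨r, hrA⟩⟩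
  exact ⟨fun x y => (reach x r (hG.preconnected x r).some rfl x.2).trans
    (reach y r (hG.preconnected y r).some rfl y.2).symm⟩

theorem tsolvable_one_induce_iff {A : Set V} (hrA : r ∉ A)
    (hNA : ∀ a ∈ A, G.neighborSet a ⊆ insert r (G.neighborSet r)) {D : V → ℕ}
    (hD : ∀ a ∈ A, D a ≤ 1) :
    TSolvable (G.induce {v | v ∉ A}) (D ∘ (↑)) ⟨r, hrA⟩ 1 ↔ TSolvable G D r 1 := by
  classical
  refine ⟨TSolvable.of_induce, ?_⟩
  rintro ⟨D', hD', hr⟩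
  induction hD' using ReflTransGen.head_induction_on with
  | refl => exact .of_le hr
  | head hstep _ ih =>
    obtain ⟨u, v, huv, h2, rfl⟩ := pebStep_iff.1 hstep
    have hu : u ∉ A := fun hu => by linarith [hD u hu]
    by_cases hur : u = r
    · subst hur
      exact .of_le (by simp only [Function.comp_apply]; omega)
    by_cases hv : v ∈ A
    · -- `u ∈ N(v) ⊆ N[r]`, so the move can be redirected to `r`.
      have hru : G.Adj r u := (hNA v hv huv.symm).resolve_left hur
      refine .head (pebStep_induce (u := ⟨u, hu⟩) (v := ⟨r, hrA⟩) hru.symm h2) (.of_le ?_)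
      simp [pebbleMove]
    · refine .head (pebStep_induce (u := ⟨u, hu⟩) (v := ⟨v, hv⟩) huv h2) (ih fun a ha => ?_)
      have hau : a ≠ u := ne_of_mem_of_not_mem ha hu
      have hav : a ≠ v := ne_of_mem_of_not_mem ha hv
      simpa [pebbleMove, hau, hav] using hD a ha

theorem finsum_eq_finsum_add_finsum_compl [Finite V] (A : Set V) (D : V → ℕ) :
    ∑ᶠ v, D v = ∑ᶠ a : A, D a + ∑ᶠ x : {v | v ∉ A}, D x := by
  classical
  cases nonempty_fintype V
  simp only [finsum_eq_sum_of_fintype]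
  exact (Fintype.sum_subtype_add_sum_subtype (· ∈ A) D).symm

theorem finsum_le_ncard_add_finsum_compl [Finite V] {A : Set V} {D : V → ℕ}
    (hD : ∀ a ∈ A, D a ≤ 1) : ∑ᶠ v, D v ≤ A.ncard + ∑ᶠ x : {v | v ∉ A}, D x := by
  classical
  cases nonempty_fintype V
  rw [finsum_eq_finsum_add_finsum_compl A, finsum_eq_sum_of_fintype (fun a : A => D a),
    Set.ncard_eq_toFinset_card']
  gcongr
  calc ∑ a : A, D a ≤ ∑ _a : A, 1 := Finset.sum_le_sum fun a _ => hD a a.2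
    _ = A.toFinset.card := by simp

theorem finsum_dite_mem_one [Finite V] (A : Set V) [DecidablePred (· ∈ A)] (C : {v | v ∉ A} → ℕ) :
    ∑ᶠ v, (if h : v ∈ A then 1 else C ⟨v, h⟩) = A.ncard + ∑ᶠ x, C x := by
  cases nonempty_fintype V
  rw [finsum_eq_finsum_add_finsum_compl A, finsum_eq_sum_of_fintype, Set.ncard_eq_toFinset_card']
  congr 1
  · simp
  · exact finsum_congr fun x => dif_neg x.2

end

/-- Neighbor Removal Lemma: if `A ⊆ N(r)` satisfies `N(A) ⊆ N[r]`,
then `π(G,r) = |A| + π(G−A, r)`. -/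
theorem neighbor_removal {V : Type} [Fintype V] (G : SimpleGraph V) (hG : G.Connected)
    (r : V) (A : Set V) (hA : A ⊆ G.neighborSet r)
    (hNA : ∀ a ∈ A, G.neighborSet a ⊆ insert r (G.neighborSet r)) :
    pin G r = A.ncard +
      pin (G.induce {v | v ∉ A}) ⟨r, fun h => G.loopless.irrefl r (hA h)⟩ := by
  classical
  have hrA : r ∉ A := fun h => G.loopless.irrefl r (hA h)
  have hH := hG.induce_of_neighborSet_subset hrA hNA
  refine piT_eq_of_forall_of_exists (fun C hC => ?_) ?_
  · by_cases hbig : ∃ a ∈ A, 2 ≤ C a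
    · obtain ⟨a, ha, h2⟩ := hbig
      exact .head (pebStep_pebbleMove (hA ha).symm h2) (.of_le (by simp [pebbleMove]))
    have hC1 : ∀ a ∈ A, C a ≤ 1 := fun a ha => by
      by_contra h
      exact hbig ⟨a, ha, by omega⟩
    refine (tsolvable_one_induce_iff hrA hNA hC1).1
      (tsolvable_of_piT_le (exists_forall_tsolvable hH _ _) ?_)
    have := finsum_le_ncard_add_finsum_compl hC1
    unfold pin at hC
    simp only [Function.comp_apply]
    omega
  · obtain ⟨C', hC', hC'u⟩ := exists_not_tsolvable (G := G.induce {v | v ∉ A}) (r := ⟨r, hrA⟩)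
      (t := 1) one_pos
    have hres : (fun v => if h : v ∈ A then 1 else C' ⟨v, h⟩) ∘ (↑) = C' :=
      funext fun x => dif_neg x.2
    refine ⟨_, ?_, fun h => hC'u (hres ▸ (tsolvable_one_induce_iff hrA hNA ?_).2 h)⟩
    · rw [finsum_dite_mem_one]
      unfold pin
      omega
    · intro a ha
      simp [ha]
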